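/- For the anti-Wick quantisation of a symbol depending only on ξ, f(x,ξ) = φ(ξ) with Fourier expansion φ(ξ) = Σ_m φ_m e^{2πi m ξ/ℓ_ξ}, the matrix elements are (Op_N^{AW}(f))_{jk} = Σ_{n∈Z} φ_{k-j+nN} e^{-ℏπ²(k-j+nN)²/ℓ_ξ²}. -/

import Mathlib

/-!
Expand `φ` in its Fourier series. In the ξ-integral, each lattice term `(n₁, n₂)` of the kernel
carries the phase `e^{-2πi (k - j + (n₁ - n₂) N) ξ / ℓξ}`, so orthogonality of the exponentials on
`[0, ℓξ]` leaves only the coefficient `c (k - j + (n₁ - n₂) N)`. The remaining Gaussian depends on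
`(n₁, n₂)` only through `q = n₁ - n₂` and the translate `x + n₂ ℓx`; summing over `n₂` unfolds the
integral over `[0, ℓx]` into a Gaussian integral over `ℝ`, which yields `e^{-ℏπ²(k-j+qN)²/ℓξ²}` and
the normalisation `√(πℏ)`. Summability of `c` and Gaussian decay make every sum–integral
interchange absolutely convergent.
-/

noncomputable section
open Complex Real MeasureTheory

/-- The coherent-state projector kernel `P(x,ξ)_{jk}` on the torus. -/
def projKernel (N : ℕ) (ℓx ℏ : ℝ) (j k : ℕ) (x ξ : ℝ) : ℂ :=
  ((Real.sqrt (1 / (π * ℏ)) : ℝ) : ℂ) * ((ℓx / N : ℝ) : ℂ) *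
    ∑' p : ℤ × ℤ,
      Complex.exp ((Complex.I / (ℏ : ℂ)) * (ξ : ℂ) *
          ((((j : ℝ) - k) / N : ℝ) - ((p.1 : ℂ) - (p.2 : ℂ))) * (ℓx : ℂ)) *
        Complex.exp (((-(1 / (2 * ℏ)) * ((j * ℓx / N - p.1 * ℓx - x) ^ 2 +
            (k * ℓx / N - p.2 * ℓx - x) ^ 2) : ℝ) : ℂ))

/-- The anti-Wick matrix element `(Op_N^{AW}(f))_{jk}` for a symbol `f`. -/
def antiWick (N : ℕ) (ℓx ℓξ ℏ : ℝ) (f : ℝ → ℝ → ℂ) (j k : ℕ) : ℂ :=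
  ((1 / (2 * π * ℏ) : ℝ) : ℂ) *
    ∫ x in (0:ℝ)..ℓx, ∫ ξ in (0:ℝ)..ℓξ, f x ξ * projKernel N ℓx ℏ j k x ξ

theorem summable_exp_neg_mul_sub_mul_sq {r L : ℝ} (hr : 0 < r) (hL : L ≠ 0) (u : ℝ) :
    Summable fun n : ℤ => rexp (-r * (u - n * L) ^ 2) := by
  -- the summand is `e^{-ru²}` times the norm of the theta term at `z = -iruL/π`, `τ = irL²/π`
  have hτ : 0 < (((r * L ^ 2 / π : ℝ) : ℂ) * I).im := by
    rw [mul_I_im, ofReal_re]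
    have := pow_two_pos_of_ne_zero hL
    positivity
  refine (((summable_jacobiTheta₂_term_iff (((-(r * u * L / π)) : ℝ) * I) _).2 hτ).norm.mul_left
    (rexp (-r * u ^ 2))).congr fun n => ?_
  rw [norm_jacobiTheta₂_term, ← Real.exp_add, mul_I_im, mul_I_im, ofReal_re, ofReal_re]
  congr 1
  field_simp
  ring

theorem summable_exp_neg_mul_sub_sq_add_sub_sq_lattice {r L : ℝ} (hr : 0 < r) (hL : L ≠ 0)
    (a b x : ℝ) :
    Summable fun p : ℤ × ℤ => rexp (-r * ((a - p.1 * L - x) ^ 2 + (b - p.2 * L - x) ^ 2)) := by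
  refine ((summable_exp_neg_mul_sub_mul_sq hr hL (a - x)).mul_of_nonneg
    (summable_exp_neg_mul_sub_mul_sq hr hL (b - x)) (fun _ => (Real.exp_pos _).le)
    (fun _ => (Real.exp_pos _).le)).congr fun p => ?_
  rw [← Real.exp_add]
  ring_nf

theorem intervalIntegral.integral_tsum_of_summable_integral_norm {ι E : Type*} [Countable ι]
    [NormedAddCommGroup E] [NormedSpace ℝ E] {a b : ℝ} (hab : a ≤ b) {F : ι → ℝ → E}
    (hF_int : ∀ i, IntervalIntegrable (F i) volume a b)
    (hF_sum : Summable fun i => ∫ x in a..b, ‖F i x‖) :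
    ∫ x in a..b, ∑' i, F i x = ∑' i, ∫ x in a..b, F i x := by
  simp only [intervalIntegral.integral_of_le hab] at hF_sum ⊢
  exact (MeasureTheory.integral_tsum_of_summable_integral_norm (fun i => (hF_int i).1) hF_sum).symm

theorem norm_cexp_two_pi_I_mul_div (n : ℤ) (ξ T : ℝ) :
    ‖cexp (2 * π * I * n * ξ / T)‖ = 1 := by
  rw [Complex.norm_exp]
  simp

theorem continuous_tsum_mul_cexp {c : ℤ → ℂ} (hc : Summable fun m => ‖c m‖) (T : ℝ) :
    Continuous fun ξ : ℝ => ∑' m : ℤ, c m * cexp (2 * π * I * m * ξ / T) :=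
  continuous_tsum (fun m => by fun_prop) hc fun m ξ => by
    rw [norm_mul, norm_cexp_two_pi_I_mul_div, mul_one]

theorem integral_cexp_two_pi_I_mul_div (n : ℤ) (T : ℝ) :
    ∫ ξ in (0 : ℝ)..T, cexp (2 * π * I * n * ξ / T) = if n = 0 then (T : ℂ) else 0 := by
  rcases eq_or_ne T 0 with rfl | hT
  · simp
  split_ifs with hn
  · simp [hn]
  have ha : 2 * π * I * n / T ≠ 0 := by simp [hn, hT, Real.pi_ne_zero]
  have hexp : ∀ ξ : ℝ, 2 * π * I * n * ξ / T = 2 * π * I * n / T * ξ := fun ξ => by ring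
  simp_rw [hexp]
  rw [integral_exp_mul_complex ha, div_mul_cancel₀ _ (ofReal_ne_zero.2 hT), mul_comm,
    exp_int_mul_two_pi_mul_I]
  simp

theorem cexp_two_pi_I_mul_div_mul_cexp_neg (m n : ℤ) (ξ T : ℝ) :
    cexp (2 * π * I * m * ξ / T) * cexp (-(2 * π * I * n * ξ / T)) =
      cexp (2 * π * I * ((m - n : ℤ) : ℂ) * ξ / T) := by
  rw [← Complex.exp_add]
  push_cast
  ring_nf

theorem integral_tsum_mul_cexp_neg {T : ℝ} (hT : 0 < T) {c : ℤ → ℂ}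
    (hc : Summable fun m => ‖c m‖) (n : ℤ) :
    ∫ ξ in (0 : ℝ)..T, (∑' m : ℤ, c m * cexp (2 * π * I * m * ξ / T)) *
        cexp (-(2 * π * I * n * ξ / T)) = T * c n := by
  simp_rw [← tsum_mul_right, mul_assoc (c _), cexp_two_pi_I_mul_div_mul_cexp_neg]
  rw [intervalIntegral.integral_tsum_of_summable_integral_norm hT.le
    (fun m => (by fun_prop : Continuous _).intervalIntegrable _ _)]
  · simp_rw [intervalIntegral.integral_const_mul, integral_cexp_two_pi_I_mul_div, sub_eq_zero]
    rw [tsum_eq_single n fun m hm => by simp [hm]]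
    simp [mul_comm]
  · simp_rw [norm_mul, norm_cexp_two_pi_I_mul_div, mul_one, intervalIntegral.integral_const,
      sub_zero, smul_eq_mul]
    exact hc.mul_left T

theorem integral_mul_tsum_cexp_neg {ι : Type*} [Countable ι] {T : ℝ} (hT : 0 < T)
    {c : ℤ → ℂ} (hc : Summable fun m => ‖c m‖) {w : ι → ℂ} (hw : Summable fun i => ‖w i‖)
    (n : ι → ℤ) :
    ∫ ξ in (0 : ℝ)..T, (∑' m : ℤ, c m * cexp (2 * π * I * m * ξ / T)) *
        ∑' i, w i * cexp (-(2 * π * I * n i * ξ / T)) = T * ∑' i, w i * c (n i) := by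
  set φ := fun ξ : ℝ => ∑' m : ℤ, c m * cexp (2 * π * I * m * ξ / T)
  have hφ : Continuous φ := continuous_tsum_mul_cexp hc T
  have hterm : ∀ ξ : ℝ, φ ξ * ∑' i, w i * cexp (-(2 * π * I * n i * ξ / T)) =
      ∑' i, w i * (φ ξ * cexp (-(2 * π * I * n i * ξ / T))) := fun ξ => by
    rw [← tsum_mul_left]
    exact tsum_congr fun i => by ring
  rw [intervalIntegral.integral_congr fun ξ _ => hterm ξ]
  rw [intervalIntegral.integral_tsum_of_summable_integral_norm hT.le
    (fun i => (by fun_prop : Continuous _).intervalIntegrable _ _)]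
  · simp_rw [intervalIntegral.integral_const_mul, φ, integral_tsum_mul_cexp_neg hT hc,
      ← tsum_mul_left]
    exact tsum_congr fun i => by ring
  · have hnorm : ∀ i ξ, ‖w i * (φ ξ * cexp (-(2 * π * I * n i * ξ / T)))‖ = ‖w i‖ * ‖φ ξ‖ :=
      fun i ξ => by simp [Complex.norm_exp]
    simp_rw [hnorm, intervalIntegral.integral_const_mul]
    exact hw.mul_right _

theorem MeasureTheory.Integrable.hasSum_intervalIntegral_comp_add_int_mul {E : Type*}
    [NormedAddCommGroup E] [NormedSpace ℝ E] {g : ℝ → E} (hg : Integrable g) {L : ℝ}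
    (hL : 0 < L) :
    HasSum (fun m : ℤ => ∫ x in (0 : ℝ)..L, g (x + m * L)) (∫ x, g x) := by
  have h := hasSum_integral_iUnion (μ := volume) (f := g) (fun m : ℤ => measurableSet_Ioc)
    (Set.pairwise_disjoint_Ioc_add_zsmul 0 L)
    (by rw [iUnion_Ioc_add_zsmul hL 0]; exact hg.integrableOn)
  rw [iUnion_Ioc_add_zsmul hL 0, Measure.restrict_univ] at h
  refine h.congr_fun fun m => ?_
  rw [intervalIntegral.integral_comp_add_right, intervalIntegral.integral_of_le (by linarith)]
  simp [add_mul, add_comm]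

theorem exp_neg_mul_sub_sq_add_sub_sq (r a b x : ℝ) :
    rexp (-r * ((a - x) ^ 2 + (b - x) ^ 2)) =
      rexp (-(2 * r) * (x - (a + b) / 2) ^ 2) * rexp (-r * (a - b) ^ 2 / 2) := by
  rw [← Real.exp_add]
  ring_nf

theorem integrable_exp_neg_mul_sub_sq_add_sub_sq {r : ℝ} (hr : 0 < r) (a b : ℝ) :
    Integrable fun x : ℝ => rexp (-r * ((a - x) ^ 2 + (b - x) ^ 2)) := by
  simp_rw [exp_neg_mul_sub_sq_add_sub_sq]
  exact ((integrable_exp_neg_mul_sq (by positivity)).comp_sub_right _).mul_const _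

theorem integral_exp_neg_mul_sub_sq_add_sub_sq (r a b : ℝ) :
    ∫ x : ℝ, rexp (-r * ((a - x) ^ 2 + (b - x) ^ 2)) =
      √(π / (2 * r)) * rexp (-r * (a - b) ^ 2 / 2) := by
  simp_rw [exp_neg_mul_sub_sq_add_sub_sq, integral_mul_const,
    integral_sub_right_eq_self (fun x => rexp (-(2 * r) * x ^ 2)), integral_gaussian]

def shearEquiv : ℤ × ℤ ≃ ℤ × ℤ where
  toFun z := (z.1 + z.2, z.2)
  invFun p := (p.1 - p.2, p.2)
  left_inv z := by simp
  right_inv p := by simp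

theorem integral_tsum_comp_add_lattice {L : ℝ} (hL : 0 < L) {G : ℤ → ℝ → ℝ}
    (hG : ∀ q, Integrable (G q)) (hG0 : ∀ q y, 0 ≤ G q y) {d : ℤ → ℂ}
    (hs : Summable fun q => (∫ y, G q y) * ‖d q‖) :
    ∫ x in (0 : ℝ)..L, ∑' p : ℤ × ℤ, (G (p.1 - p.2) (x + p.2 * L) : ℂ) * d (p.1 - p.2) =
      ∑' q, ((∫ y, G q y : ℝ) : ℂ) * d q := by
  set H : ℤ × ℤ → ℝ → ℂ := fun z x => (G z.1 (x + z.2 * L) : ℂ) * d z.1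
  have hperiod := fun q => (hG q).hasSum_intervalIntegral_comp_add_int_mul hL
  have hH_int : ∀ z, IntervalIntegrable (H z) volume 0 L := fun z =>
    (((hG z.1).comp_add_right (z.2 * L)).ofReal.mul_const _).intervalIntegrable
  have hH_norm : ∀ z, ∫ x in (0 : ℝ)..L, ‖H z x‖ =
      (∫ x in (0 : ℝ)..L, G z.1 (x + z.2 * L)) * ‖d z.1‖ := fun z => by
    simp_rw [H, norm_mul, norm_real, Real.norm_of_nonneg (hG0 _ _),
      intervalIntegral.integral_mul_const]
  have hH_sum : Summable fun z => ∫ x in (0 : ℝ)..L, ‖H z x‖ := by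
    simp_rw [hH_norm]
    rw [summable_prod_of_nonneg fun z =>
      mul_nonneg (intervalIntegral.integral_nonneg hL.le fun x _ => hG0 _ _) (norm_nonneg _)]
    dsimp only
    refine ⟨fun q => ((hperiod q).mul_right ‖d q‖).summable, ?_⟩
    simpa only [tsum_mul_right, (hperiod _).tsum_eq] using hs
  have hH_sum' : Summable fun z => ∫ x in (0 : ℝ)..L, H z x :=
    hH_sum.of_norm_bounded fun z => intervalIntegral.norm_integral_le_integral_norm hL.le
  have hshear : ∀ x, ∑' p : ℤ × ℤ, (G (p.1 - p.2) (x + p.2 * L) : ℂ) * d (p.1 - p.2) =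
      ∑' z, H z x := fun x => by
    rw [← shearEquiv.tsum_eq]
    simp [shearEquiv, H]
  simp_rw [hshear]
  rw [intervalIntegral.integral_tsum_of_summable_integral_norm hL.le hH_int hH_sum,
    hH_sum'.tsum_prod' fun q => hH_sum'.prod_factor q]
  refine tsum_congr fun q => ?_
  simp_rw [H, intervalIntegral.integral_mul_const, intervalIntegral.integral_ofReal]
  rw [tsum_mul_right, ← ofReal_tsum, (hperiod q).tsum_eq]

theorem integral_tsum_gaussian_lattice {r L : ℝ} (hr : 0 < r) (hL : 0 < L) (a b : ℝ)
    {d : ℤ → ℂ} (hd : Summable fun q => ‖d q‖) :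
    ∫ x in (0 : ℝ)..L, ∑' p : ℤ × ℤ,
        (rexp (-r * ((a - p.1 * L - x) ^ 2 + (b - p.2 * L - x) ^ 2)) : ℂ) * d (p.1 - p.2) =
      √(π / (2 * r)) * ∑' q : ℤ, rexp (-r * (a - q * L - b) ^ 2 / 2) * d q := by
  set G : ℤ → ℝ → ℝ := fun q y => rexp (-r * ((a - q * L - y) ^ 2 + (b - y) ^ 2))
  have hG : ∀ q, ∫ y, G q y = √(π / (2 * r)) * rexp (-r * (a - q * L - b) ^ 2 / 2) :=
    fun q => integral_exp_neg_mul_sub_sq_add_sub_sq r _ b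
  have hshift : ∀ (p : ℤ × ℤ) x, rexp (-r * ((a - p.1 * L - x) ^ 2 + (b - p.2 * L - x) ^ 2)) =
      G (p.1 - p.2) (x + p.2 * L) := fun p x => by
    simp only [G]; push_cast; ring_nf
  simp_rw [hshift]
  rw [integral_tsum_comp_add_lattice (G := G) hL
    (fun q => integrable_exp_neg_mul_sub_sq_add_sub_sq hr _ b) (fun q y => (Real.exp_pos _).le)]
  · simp_rw [hG, ← tsum_mul_left]
    push_cast
    exact tsum_congr fun q => by ring
  · refine Summable.of_nonneg_of_le (fun q => by positivity) (fun q => ?_)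
      (hd.mul_left √(π / (2 * r)))
    rw [hG, mul_right_comm]
    refine mul_le_of_le_one_right (by positivity) (Real.exp_le_one_iff.2 ?_)
    have := sq_nonneg (a - q * L - b)
    nlinarith

theorem projKernel_eq_tsum {N : ℕ} (hN : N ≠ 0) {ℓx ℓξ ℏ : ℝ} (hℓx : ℓx ≠ 0) (hℓξ : ℓξ ≠ 0)
    (hℏ : ℏ = ℓx * ℓξ / (2 * π * N)) (j k : ℕ) (x ξ : ℝ) :
    projKernel N ℓx ℏ j k x ξ = ((√(1 / (π * ℏ)) * (ℓx / N) : ℝ) : ℂ) *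
      ∑' p : ℤ × ℤ,
        (rexp (-(1 / (2 * ℏ)) * ((j * ℓx / N - p.1 * ℓx - x) ^ 2 +
            (k * ℓx / N - p.2 * ℓx - x) ^ 2)) : ℂ) *
          cexp (-(2 * π * I * ((k - j + (p.1 - p.2) * N : ℤ) : ℂ) * ξ / ℓξ)) := by
  rw [projKernel, ofReal_mul]
  congr 1
  refine tsum_congr fun p => ?_
  rw [mul_comm, ofReal_exp]
  congr 2
  have : (ℓx : ℂ) ≠ 0 := ofReal_ne_zero.2 hℓx
  have : (ℓξ : ℂ) ≠ 0 := ofReal_ne_zero.2 hℓξ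
  subst hℏ
  push_cast
  field_simp
  ring

theorem integral_tsum_mul_projKernel {N : ℕ} (hN : 0 < N) {ℓx ℓξ ℏ : ℝ} (hℓx : 0 < ℓx)
    (hℓξ : 0 < ℓξ) (hℏ : ℏ = ℓx * ℓξ / (2 * π * N)) {c : ℤ → ℂ}
    (hc : Summable fun m => ‖c m‖) (j k : ℕ) (x : ℝ) :
    ∫ ξ in (0 : ℝ)..ℓξ, (∑' m : ℤ, c m * cexp (2 * π * I * m * ξ / ℓξ)) *
        projKernel N ℓx ℏ j k x ξ =
      ((√(1 / (π * ℏ)) * (ℓx / N) : ℝ) : ℂ) * (ℓξ * ∑' p : ℤ × ℤ,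
        (rexp (-(1 / (2 * ℏ)) * ((j * ℓx / N - p.1 * ℓx - x) ^ 2 +
            (k * ℓx / N - p.2 * ℓx - x) ^ 2)) : ℂ) * c (k - j + (p.1 - p.2) * N)) := by
  have hℏpos : 0 < ℏ := by rw [hℏ]; positivity
  simp_rw [projKernel_eq_tsum hN.ne' hℓx.ne' hℓξ.ne' hℏ]
  rw [intervalIntegral.integral_congr fun ξ _ => mul_left_comm _ _ _,
    intervalIntegral.integral_const_mul, integral_mul_tsum_cexp_neg hℓξ hc]
  simpa only [norm_real, Real.norm_of_nonneg (Real.exp_pos _).le] using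
    summable_exp_neg_mul_sub_sq_add_sub_sq_lattice (by positivity) hℓx.ne' _ _ x

theorem antiWick_normalization_eq_one {N : ℕ} (hN : 0 < N) {ℓx ℓξ ℏ : ℝ} (hℓx : 0 < ℓx)
    (hℓξ : 0 < ℓξ) (hℏ : ℏ = ℓx * ℓξ / (2 * π * N)) :
    1 / (2 * π * ℏ) * (√(1 / (π * ℏ)) * (ℓx / N)) * (ℓξ * √(π / (2 * (1 / (2 * ℏ))))) = 1 := by
  have hℏpos : 0 < ℏ := by rw [hℏ]; positivity
  have hsqrt : √(1 / (π * ℏ)) * √(π / (2 * (1 / (2 * ℏ)))) = 1 := by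
    rw [← Real.sqrt_mul (by positivity)]
    field_simp
    simp
  calc _ = √(1 / (π * ℏ)) * √(π / (2 * (1 / (2 * ℏ)))) * (ℓx * ℓξ / (2 * π * N) / ℏ) := by ring
    _ = 1 := by rw [hsqrt, ← hℏ, div_self hℏpos.ne', one_mul]

theorem antiWick_of_xi_only_general (N : ℕ) (hN : 0 < N) (ℓx ℓξ ℏ : ℝ)
    (hℓx : 0 < ℓx) (hℓξ : 0 < ℓξ) (hℏ : ℏ = ℓx * ℓξ / (2 * π * N))
    (φ : ℝ → ℂ) (c : ℤ → ℂ) (hc : Summable fun m => ‖c m‖)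
    (hφ : ∀ ξ : ℝ, φ ξ = ∑' m : ℤ, c m * Complex.exp (2 * π * I * (m : ℂ) * (ξ : ℂ) / (ℓξ : ℂ)))
    (f : ℝ → ℝ → ℂ) (hf : ∀ x ξ, f x ξ = φ ξ)
    (j k : ℕ) :
    antiWick N ℓx ℓξ ℏ f j k =
      ∑' n : ℤ, c ((k : ℤ) - j + n * N) *
        ((Real.exp (-(ℏ * π ^ 2 * ((k : ℝ) - j + n * N) ^ 2 / ℓξ ^ 2)) : ℝ) : ℂ) := by
  have hℏpos : 0 < ℏ := by rw [hℏ]; positivity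
  have hexp : ∀ q : ℤ, -(1 / (2 * ℏ)) * (j * ℓx / N - q * ℓx - k * ℓx / N) ^ 2 / 2 =
      -(ℏ * π ^ 2 * ((k : ℝ) - j + q * N) ^ 2 / ℓξ ^ 2) := fun q => by
    subst hℏ; field_simp; ring
  simp_rw [antiWick, hf, hφ, integral_tsum_mul_projKernel hN hℓx hℓξ hℏ hc,
    intervalIntegral.integral_const_mul]
  rw [integral_tsum_gaussian_lattice (by positivity) hℓx _ _ (d := fun q => c (k - j + q * N))]
  · simp_rw [hexp, mul_comm _ (c _)]
    generalize (∑' n : ℤ, _ : ℂ) = S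
    calc _ = (((1 / (2 * π * ℏ) * (√(1 / (π * ℏ)) * (ℓx / N)) *
          (ℓξ * √(π / (2 * (1 / (2 * ℏ)))))) : ℝ) : ℂ) * S := by push_cast; ring
      _ = S := by rw [antiWick_normalization_eq_one hN hℓx hℓξ hℏ, ofReal_one, one_mul]
  · exact hc.comp_injective fun q q' h => by simpa [hN.ne'] using h

/-- For a symbol `f(x,ξ) = φ(ξ)` with Fourier coefficients `c`, the anti-Wick matrix
elements are `(Op_N^{AW}(f))_{jk} = Σ_n c_{k-j+nN} e^{-ℏπ²(k-j+nN)²/ℓ_ξ²}`. -/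
theorem antiWick_of_xi_only (N : ℕ) (hN : 0 < N) (ℓx ℓξ ℏ : ℝ)
    (hℓx : 0 < ℓx) (hℓξ : 0 < ℓξ) (hℏ : ℏ = ℓx * ℓξ / (2 * π * N))
    (φ : ℝ → ℂ) (c : ℤ → ℂ) (hc : Summable fun m => ‖c m‖)
    (hφ : ∀ ξ : ℝ, φ ξ = ∑' m : ℤ, c m * Complex.exp (2 * π * I * (m : ℂ) * (ξ : ℂ) / (ℓξ : ℂ)))
    (f : ℝ → ℝ → ℂ) (hf : ∀ x ξ, f x ξ = φ ξ)
    (j k : ℕ) (hj : j < N) (hk : k < N) :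
    antiWick N ℓx ℓξ ℏ f j k =
      ∑' n : ℤ, c ((k : ℤ) - j + n * N) *
        ((Real.exp (-(ℏ * π ^ 2 * ((k : ℝ) - j + n * N) ^ 2 / ℓξ ^ 2)) : ℝ) : ℂ) :=
  antiWick_of_xi_only_general N hN ℓx ℓξ ℏ hℓx hℓξ hℏ φ c hc hφ f hf j k
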